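/- arXiv:2502.18213 — 5 statements merged into one kernel-verified Lean document; each statement's English description precedes it below -/
import Mathlib

section
/- Let f : ℝ → ℝ be defined by f(x) = 0 for x ≤ 0, f(x) = x for 0 ≤ x ≤ 1, f(x) = 1 for x ≥ 1, and let m ≥ 1, ε ∈ (0,1). Let a ∈ ℝ^{2m} have a_i = 1 for i ≤ m and a_i = -1 for i > m. Let b' ∈ ℝ^{2m} have all entries equal to 1 except one entry equal to 1 + 1/ε. Then for all p ≥ 1 and all x ≤ 0, ‖f(a·x) - b'‖_p^p ≥ ‖f(-a) - b'‖_p^p, where f is applied entrywise. -/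
/-- For `f x = max 0 (min x 1)`, `a ∈ ℝ^{2m}` with `a_i = 1` for `i ≤ m` and `a_i = -1`
otherwise, and `b'` all ones except one entry `1 + 1/ε`: for all `p ≥ 1` and all `x ≤ 0`,
`‖f(a·x) - b'‖_p^p ≥ ‖f(-a) - b'‖_p^p`. -/
theorem lb_p_gt2_neg_side (m : ℕ) (hm : 1 ≤ m) (ε : ℝ) (hε0 : 0 < ε) (hε1 : ε < 1)
    (f : ℝ → ℝ) (hf : ∀ x : ℝ, f x = max 0 (min x 1))
    (a : Fin (2 * m) → ℝ) (ha : ∀ i : Fin (2 * m), a i = if (i : ℕ) < m then 1 else -1)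
    (b' : Fin (2 * m) → ℝ) (istar : Fin (2 * m))
    (hb1 : ∀ i : Fin (2 * m), i ≠ istar → b' i = 1) (hb2 : b' istar = 1 + 1 / ε)
    (p : ℝ) (hp : 1 ≤ p) :
    ∀ x : ℝ, x ≤ 0 →
      ∑ i, |f (a i * x) - b' i| ^ p ≥ ∑ i, |f (-(a i)) - b' i| ^ p := by
  intro x hx
  apply Finset.sum_le_sum
  intro i _
  have hb : 1 ≤ b' i := by
    by_cases h : i = istar
    · subst h; rw [hb2]; nlinarith [one_div_pos.mpr hε0]
    · rw [hb1 i h]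
  have key : ∀ y : ℝ, |f y - b' i| = b' i - f y := by
    intro y
    have h1 : f y ≤ 1 := by rw [hf]; simp [le_max_iff, min_le_iff]
    rw [abs_sub_comm, abs_of_nonneg (by linarith)]
  rw [key, key]
  have hfle : f (-(a i)) ≤ 1 := by rw [hf]; simp [le_max_iff, min_le_iff]
  apply Real.rpow_le_rpow (by linarith)
  · rcases lt_or_ge (i : ℕ) m with h | h
    · have : a i = 1 := by rw [ha]; simp [h]
      rw [this]
      have h1 : f (1 * x) = 0 := by
        rw [hf, one_mul, min_eq_left (by linarith), max_eq_left hx]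
      have h2 : f (-1) = 0 := by rw [hf]; norm_num
      rw [h1, h2]
    · have : a i = -1 := by rw [ha]; simp [Nat.not_lt.mpr h]
      rw [this]
      have h1 : f (-(-1)) = 1 := by rw [hf]; norm_num
      have h2 : 0 ≤ f (-1 * x) := by rw [hf]; exact le_max_left _ _
      have h3 : f (-1 * x) ≤ 1 := by rw [hf]; simp [le_max_iff, min_le_iff]
      rw [h1]; linarith
  · linarith
end

section
/- Let f : ℝ → ℝ be defined by f(x) = 0 for x ≤ 0, f(x) = x for 0 ≤ x ≤ 1, f(x) = 1 for x ≥ 1, and let m ≥ 1, ε ∈ (0,1). Let a ∈ ℝ^{2m} have a_i = 1 for i ≤ m and a_i = -1 for i > m. Let b' ∈ ℝ^{2m} have all entries equal to 1 except one entry equal to 1 + 1/ε. Then for all p ≥ 1 and all x ≥ 0, ‖f(a·x) - b'‖_p^p ≥ ‖f(a) - b'‖_p^p, where f is applied entrywise. -/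
/-- For `f x = max 0 (min x 1)`, `a ∈ ℝ^{2m}` with `a_i = 1` for `i ≤ m` and `a_i = -1`
otherwise, and `b'` all ones except one entry `1 + 1/ε`: for all `p ≥ 1` and all `x ≥ 0`,
`‖f(a·x) - b'‖_p^p ≥ ‖f(a) - b'‖_p^p`. -/
theorem lb_p_gt2_pos_side (m : ℕ) (hm : 1 ≤ m) (ε : ℝ) (hε0 : 0 < ε) (hε1 : ε < 1)
    (f : ℝ → ℝ) (hf : ∀ x : ℝ, f x = max 0 (min x 1))
    (a : Fin (2 * m) → ℝ) (ha : ∀ i : Fin (2 * m), a i = if (i : ℕ) < m then 1 else -1)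
    (b' : Fin (2 * m) → ℝ) (istar : Fin (2 * m))
    (hb1 : ∀ i : Fin (2 * m), i ≠ istar → b' i = 1) (hb2 : b' istar = 1 + 1 / ε)
    (p : ℝ) (hp : 1 ≤ p) :
    ∀ x : ℝ, 0 ≤ x →
      ∑ i, |f (a i * x) - b' i| ^ p ≥ ∑ i, |f (a i) - b' i| ^ p := by
  intro x hx
  apply Finset.sum_le_sum
  intro i _
  apply Real.rpow_le_rpow (abs_nonneg _) _ (le_trans zero_le_one hp)
  rw [ha i]
  by_cases hi : (i : ℕ) < m
  · simp only [hi, if_true, one_mul]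
    have hfx0 : 0 ≤ f x := by rw [hf]; exact le_max_left _ _
    have hfx1 : f x ≤ 1 := by
      rw [hf]; exact max_le zero_le_one (min_le_right _ _)
    have hf1 : f 1 = 1 := by rw [hf]; norm_num
    by_cases his : i = istar
    · subst his
      rw [hb2, hf1]
      have hε : 0 < 1 / ε := by positivity
      rw [abs_of_nonpos (by linarith), abs_of_nonpos (by linarith)]
      linarith
    · rw [hb1 i his, hf1]
      simpa using abs_nonneg (f x - 1)
  · simp only [hi, if_false]
    have h1 : f (-1 * x) = 0 := by
      rw [hf, max_eq_left]
      exact min_le_of_left_le (by linarith)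
    have h2 : f (-1) = 0 := by rw [hf]; norm_num
    rw [h1, h2]
end

section
/- Suppose A ∈ ℝ^{n×d} has full column rank with Lewis weights w_1, …, w_n and W = diag(w_1, …, w_n). Then for every vector u in the column space of A and p ≥ 1, ‖W^{1/2 - 1/p} u‖_2 ≤ d^{1/2 - 1/max(2,p)} ‖u‖_p. -/
/-!
With `c_k = w_k^{1-2/p}` and `M = Aᵀ diag(c) A`, the fixed-point equation says that the
leverage scores `a_iᵀ M⁻¹ a_i` equal `w_i^{2/p}`; hence `∑ w_i = tr(M⁻¹ M) = d`, and for
`u = A x` the left-hand side is `(xᵀ M x)^{1/2}`, while Cauchy–Schwarz in the `M`-inner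
product gives `u_i² ≤ w_i^{2/p} xᵀ M x`. For `p ≥ 2` the bound is Hölder's inequality with
weights `w`; for `p ≤ 2` each term `c_i u_i²` is at most `(xᵀ M x)^{1-p/2} |u_i|^p`.
-/

open Matrix Real

namespace Matrix

theorem mulVec_injective_of_rank_eq_card {m n K : Type*} [Fintype n] [Field K]
    {A : Matrix m n K} (h : A.rank = Fintype.card n) : Function.Injective A.mulVec :=
  mulVec_injective_iff.2 <| linearIndependent_iff_card_eq_finrank_span.2 <| by
    rw [← h, rank_eq_finrank_span_cols]
    rfl

variable {m n K : Type*} [Fintype m] [Fintype n]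

theorem posDef_transpose_mul_diagonal_mul [DecidableEq m] {A : Matrix m n ℝ} {c : m → ℝ}
    (hc : ∀ i, 0 < c i) (hA : Function.Injective A.mulVec) :
    (Aᵀ * diagonal c * A).PosDef := by
  simpa using (PosDef.diagonal hc).conjTranspose_mul_mul_same hA

theorem dotProduct_transpose_mul_diagonal_mul_mulVec [CommRing K] [DecidableEq m]
    (A : Matrix m n K) (c : m → K) (x y : n → K) :
    x ⬝ᵥ ((Aᵀ * diagonal c * A) *ᵥ y) = ∑ i, c i * ((A *ᵥ x) i * (A *ᵥ y) i) := by
  rw [Matrix.mul_assoc, ← mulVec_mulVec, dotProduct_mulVec, vecMul_transpose, ← mulVec_mulVec]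
  simp only [dotProduct, mulVec_diagonal]
  exact Finset.sum_congr rfl fun i _ => by ring

theorem sum_mul_dotProduct_mulVec_eq_trace [CommRing K] [DecidableEq m] (A : Matrix m n K)
    (c : m → K) (N : Matrix n n K) :
    ∑ i, c i * (A i ⬝ᵥ (N *ᵥ A i)) = trace (N * (Aᵀ * diagonal c * A)) := by
  rw [Matrix.mul_assoc, ← Matrix.mul_assoc N, trace_mul_comm (N * Aᵀ), Matrix.mul_assoc, trace]
  simp only [diag, diagonal_mul]
  refine Finset.sum_congr rfl fun i _ => ?_
  rw [mul_apply']
  rfl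

theorem sum_mul_dotProduct_inv_mulVec_eq_card [Field K] [DecidableEq m] [DecidableEq n]
    (A : Matrix m n K) (c : m → K) (h : IsUnit (Aᵀ * diagonal c * A).det) :
    ∑ i, c i * (A i ⬝ᵥ ((Aᵀ * diagonal c * A)⁻¹ *ᵥ A i)) = Fintype.card n := by
  rw [sum_mul_dotProduct_mulVec_eq_trace, nonsing_inv_mul _ h, trace_one]

theorem PosDef.sq_dotProduct_le [DecidableEq n] {M : Matrix n n ℝ} (hM : M.PosDef)
    (x y : n → ℝ) : (y ⬝ᵥ x) ^ 2 ≤ (y ⬝ᵥ (M⁻¹ *ᵥ y)) * (x ⬝ᵥ (M *ᵥ x)) := by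
  set z := M⁻¹ *ᵥ y
  have hMz : M *ᵥ z = y := by
    rw [mulVec_mulVec, mul_nonsing_inv M ((isUnit_iff_isUnit_det M).1 hM.isUnit), one_mulVec]
  have hsymm : ∀ v, v ᵥ* M = M *ᵥ v := fun v => by
    conv_lhs => rw [← hM.isHermitian.eq, conjTranspose_eq_transpose_of_trivial]
    exact vecMul_transpose M v
  have hyx : y ⬝ᵥ x = z ⬝ᵥ (M *ᵥ x) := by rw [dotProduct_mulVec, hsymm, hMz]
  have hyz : y ⬝ᵥ z = z ⬝ᵥ (M *ᵥ z) := by rw [hMz, dotProduct_comm]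
  have hxz : x ⬝ᵥ (M *ᵥ z) = z ⬝ᵥ (M *ᵥ x) := by rw [hMz, dotProduct_comm, hyx]
  have hcs := (toBilin' M).apply_mul_apply_le_of_forall_zero_le
    (fun v => by simpa [toBilin'_apply'] using hM.posSemidef.dotProduct_mulVec_nonneg v) z x
  simp only [toBilin'_apply'] at hcs
  rw [hxz] at hcs
  rwa [hyx, hyz, sq]

end Matrix

theorem rpow_half_sub_inv_mul_sq {w p : ℝ} (hw : 0 ≤ w) (u : ℝ) :
    (w ^ ((1 : ℝ) / 2 - 1 / p) * u) ^ 2 = w ^ (1 - 2 / p) * u ^ 2 := by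
  rw [mul_pow, ← rpow_two (w ^ _), ← rpow_mul hw]
  ring_nf

theorem sq_eq_abs_rpow_mul_sq_rpow (u p : ℝ) : u ^ 2 = |u| ^ p * (u ^ 2) ^ ((2 - p) / 2) := by
  have hexp : p + 2 * ((2 - p) / 2) = 2 := by ring
  rw [← sq_abs, ← rpow_two, ← rpow_mul (abs_nonneg u),
    ← rpow_add' (abs_nonneg u) (by rw [hexp]; norm_num), hexp]

section

variable {ι : Type*} [Fintype ι]

theorem sum_mul_sq_rpow_half_le_of_le_two {p : ℝ} (hp0 : 0 < p) (hp2 : p ≤ 2) {w u : ι → ℝ}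
    (hw : ∀ i, 0 < w i)
    (hu : ∀ i, u i ^ 2 ≤ w i ^ (2 / p) * ∑ j, w j ^ (1 - 2 / p) * u j ^ 2) :
    (∑ i, w i ^ (1 - 2 / p) * u i ^ 2) ^ ((1 : ℝ) / 2) ≤ (∑ i, |u i| ^ p) ^ (1 / p) := by
  set S := ∑ i, w i ^ (1 - 2 / p) * u i ^ 2
  set T := ∑ i, |u i| ^ p
  set q := (2 - p) / 2
  have hq : 0 ≤ q := by simp only [q]; linarith
  have hwr : ∀ i (r : ℝ), 0 ≤ w i ^ r := fun i r => rpow_nonneg (hw i).le r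
  have hS : 0 ≤ S := Finset.sum_nonneg fun i _ => mul_nonneg (hwr i _) (sq_nonneg _)
  have hT : 0 ≤ T := Finset.sum_nonneg fun i _ => by positivity
  have hterm : ∀ i, w i ^ (1 - 2 / p) * u i ^ 2 ≤ S ^ q * |u i| ^ p := fun i => by
    have hwi : w i ^ (1 - 2 / p) * (w i ^ (2 / p)) ^ q = 1 := by
      rw [← rpow_mul (hw i).le, ← rpow_add (hw i),
        show 1 - 2 / p + 2 / p * q = 0 by simp only [q]; field_simp; ring, rpow_zero]
    calc w i ^ (1 - 2 / p) * u i ^ 2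
        = w i ^ (1 - 2 / p) * |u i| ^ p * (u i ^ 2) ^ q := by
          rw [mul_assoc, ← sq_eq_abs_rpow_mul_sq_rpow]
      _ ≤ w i ^ (1 - 2 / p) * |u i| ^ p * (w i ^ (2 / p) * S) ^ q :=
          mul_le_mul_of_nonneg_left (rpow_le_rpow (sq_nonneg _) (hu i) hq)
            (mul_nonneg (hwr i _) (by positivity))
      _ = (w i ^ (1 - 2 / p) * (w i ^ (2 / p)) ^ q) * (S ^ q * |u i| ^ p) := by
          rw [mul_rpow (hwr i _) hS]
          ring
      _ = S ^ q * |u i| ^ p := by rw [hwi, one_mul]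
  have hSq : S ≤ S ^ q * T := by
    rw [Finset.mul_sum]
    exact Finset.sum_le_sum fun i _ => hterm i
  have hSp : S ^ (p / 2) ≤ T := by
    rcases hS.eq_or_lt with hS0 | hSpos
    · rw [← hS0, zero_rpow (by positivity)]
      exact hT
    · have hsplit : S ^ q * S ^ (p / 2) = S := by
        rw [← rpow_add hSpos, show q + p / 2 = 1 by simp only [q]; ring, rpow_one]
      exact le_of_mul_le_mul_left (hsplit.trans_le hSq) (rpow_pos_of_pos hSpos _)
  calc S ^ ((1 : ℝ) / 2) = (S ^ (p / 2)) ^ (1 / p) := by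
        rw [← rpow_mul hS]
        field_simp
    _ ≤ T ^ (1 / p) := by gcongr

theorem sum_mul_sq_rpow_half_le_of_two_le {p : ℝ} (hp : 2 ≤ p) {w : ι → ℝ} (hw : ∀ i, 0 < w i)
    (u : ι → ℝ) :
    (∑ i, w i ^ (1 - 2 / p) * u i ^ 2) ^ ((1 : ℝ) / 2) ≤
      (∑ i, w i) ^ ((1 : ℝ) / 2 - 1 / p) * (∑ i, |u i| ^ p) ^ (1 / p) := by
  have hp0 : 0 < p := by linarith
  have hwr : ∀ i (r : ℝ), 0 ≤ w i ^ r := fun i r => rpow_nonneg (hw i).le r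
  have hholder := inner_le_weight_mul_Lp_of_nonneg Finset.univ (by linarith : (1 : ℝ) ≤ p / 2)
    w (fun i => w i ^ (-(2 / p)) * u i ^ 2) (fun i => (hw i).le)
    (fun i => mul_nonneg (hwr i _) (sq_nonneg _))
  have hsq : ∀ i, w i * (w i ^ (-(2 / p)) * u i ^ 2) = w i ^ (1 - 2 / p) * u i ^ 2 := fun i => by
    rw [sub_eq_add_neg, rpow_add (hw i), rpow_one, mul_assoc]
  have habs : ∀ i, w i * (w i ^ (-(2 / p)) * u i ^ 2) ^ (p / 2) = |u i| ^ p := fun i => by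
    rw [mul_rpow (hwr i _) (sq_nonneg _), ← rpow_mul (hw i).le,
      show -(2 / p) * (p / 2) = -1 by field_simp, rpow_neg_one, ← mul_assoc,
      mul_inv_cancel₀ (hw i).ne', one_mul, ← sq_abs, ← rpow_two, ← rpow_mul (abs_nonneg _)]
    ring_nf
  simp only [hsq, habs, inv_div] at hholder
  have hW : 0 ≤ ∑ i, w i := Finset.sum_nonneg fun i _ => (hw i).le
  have hT : 0 ≤ ∑ i, |u i| ^ p := Finset.sum_nonneg fun i _ => by positivity
  calc (∑ i, w i ^ (1 - 2 / p) * u i ^ 2) ^ ((1 : ℝ) / 2)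
      ≤ ((∑ i, w i) ^ (1 - 2 / p) * (∑ i, |u i| ^ p) ^ (2 / p)) ^ ((1 : ℝ) / 2) :=
        rpow_le_rpow (Finset.sum_nonneg fun i _ => mul_nonneg (hwr i _) (sq_nonneg _)) hholder
          (by norm_num)
    _ = (∑ i, w i) ^ ((1 : ℝ) / 2 - 1 / p) * (∑ i, |u i| ^ p) ^ (1 / p) := by
        rw [mul_rpow (rpow_nonneg hW _) (rpow_nonneg hT _), ← rpow_mul hW, ← rpow_mul hT]
        ring_nf

end

/-- Property (c) of Lewis weights: if `A` has full column rank with `ℓ_p`-Lewis weights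
`w_1,…,w_n` and `W = diag(w)`, then for every `u` in the column space of `A`,
`‖W^{1/2-1/p} u‖_2 ≤ d^{1/2 - 1/max(2,p)} ‖u‖_p`. -/
theorem lewis_weight_weighted_l2_bound (n d : ℕ) (p : ℝ) (hp : 1 ≤ p)
    (A : Matrix (Fin n) (Fin d) ℝ) (hrank : A.rank = d)
    (w : Fin n → ℝ) (hw : ∀ i, 0 < w i)
    (hfix : ∀ i, w i =
      (A i ⬝ᵥ ((Aᵀ * Matrix.diagonal (fun k => w k ^ (1 - 2 / p)) * A)⁻¹ *ᵥ A i)) ^ (p / 2))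
    (u : Fin n → ℝ) (hu : ∃ x : Fin d → ℝ, u = A *ᵥ x) :
    (∑ i, (w i ^ ((1 : ℝ) / 2 - 1 / p) * u i) ^ 2) ^ ((1 : ℝ) / 2) ≤
      (d : ℝ) ^ ((1 : ℝ) / 2 - 1 / max 2 p) * (∑ i, |u i| ^ p) ^ (1 / p) := by
  obtain ⟨x, rfl⟩ := hu
  have hp0 : 0 < p := by linarith
  set M := Aᵀ * diagonal (fun k => w k ^ (1 - 2 / p)) * A
  have hM : M.PosDef := posDef_transpose_mul_diagonal_mul (fun k => rpow_pos_of_pos (hw k) _)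
    (mulVec_injective_of_rank_eq_card (by rw [hrank, Fintype.card_fin]))
  have hlev : ∀ i, A i ⬝ᵥ (M⁻¹ *ᵥ A i) = w i ^ (2 / p) := fun i => by
    rw [hfix i, ← inv_div, rpow_inv_rpow _ (by positivity)]
    simpa using hM.inv.posSemidef.dotProduct_mulVec_nonneg (A i)
  have hsum : ∑ i, w i = d := calc
    ∑ i, w i = ∑ i, w i ^ (1 - 2 / p) * (A i ⬝ᵥ (M⁻¹ *ᵥ A i)) := by
      simp only [hlev, ← rpow_add (hw _), sub_add_cancel, rpow_one]
    _ = d := by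
      rw [sum_mul_dotProduct_inv_mulVec_eq_card A _ ((isUnit_iff_isUnit_det M).1 hM.isUnit),
        Fintype.card_fin]
  have hquad : x ⬝ᵥ (M *ᵥ x) = ∑ i, w i ^ (1 - 2 / p) * (A *ᵥ x) i ^ 2 := by
    simp only [M, dotProduct_transpose_mul_diagonal_mul_mulVec, sq]
  have hcs : ∀ i, (A *ᵥ x) i ^ 2 ≤ w i ^ (2 / p) * ∑ j, w j ^ (1 - 2 / p) * (A *ᵥ x) j ^ 2 :=
    fun i => by
      have := hM.sq_dotProduct_le x (A i)
      rwa [hlev, hquad] at this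
  simp only [rpow_half_sub_inv_mul_sq (hw _).le]
  rcases le_total p 2 with hp2 | hp2
  · rw [max_eq_left hp2, sub_self, rpow_zero, one_mul]
    exact sum_mul_sq_rpow_half_le_of_le_two hp0 hp2 hw hcs
  · rw [max_eq_right hp2, ← hsum]
    exact sum_mul_sq_rpow_half_le_of_two_le hp2 hw _
end

section
/- Let g : ℝ^d → ℝ^n be the map x ↦ f(Ax) applied entrywise for a 1-Lipschitz f with f(0)=0, and let Λ be a positive diagonal matrix. If ‖Λ A x‖_p ≤ R^{1/p} and ‖Λ A x̄‖_p ≤ R^{1/p}, then for every coordinate i, |Λ_{ii}(f(Ax) - f(Ax̄))_i| ≤ 2 d^{1/2 - 1/max(2,p)} w_i^{1/p} R^{1/p}, where w_i is the i-th ℓ_p-Lewis weight of ΛA. -/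
open Matrix

/-!
Write `U = ΛA`, `W = diag(w^{1-2/p})` and `M = Uᵀ W U`, which is positive definite since `U` has
full column rank. The Lewis fixed-point equation says `U_i ⬝ M⁻¹ U_i = w_i^{2/p}`, so Cauchy–Schwarz
in the inner product given by `M` yields `(Ux)_i² ≤ w_i^{2/p} ∑_k w_k^{1-2/p} (Ux)_k²`.
For `p > 2`, Hölder bounds this sum by `(∑ w_k)^{1-2/p} ‖Ux‖_p²`, and `∑ w_k = tr(M⁻¹M) = d`.
For `p ≤ 2`, evaluating the inequality at the coordinate maximising `|(Ux)_k| / w_k^{1/p}` shows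
that this maximum is at most `‖Ux‖_p`. Finally `|f s - f t| ≤ |s| + |t|` because `f` is
`1`-Lipschitz with `f 0 = 0`.
-/

section RealInequalities

open Finset

variable {ι : Type*} [Fintype ι] {a w : ι → ℝ} {p : ℝ}

theorem le_rpow_mul_sum_rpow_of_le_two (hp : 0 < p) (hp2 : p ≤ 2) (ha : ∀ k, 0 ≤ a k)
    (hw : ∀ k, 0 < w k) (h : ∀ k, a k ^ 2 ≤ w k ^ (2 / p) * ∑ j, w j ^ (1 - 2 / p) * a j ^ 2)
    (i : ι) : a i ≤ w i ^ (1 / p) * (∑ j, a j ^ p) ^ (1 / p) := by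
  have hsplit : ∀ x : ℝ, 0 ≤ x → x ^ 2 = x ^ p * x ^ (2 - p) := fun x hx => by
    rw [← Real.rpow_add' hx (by norm_num), add_sub_cancel, Real.rpow_two]
  set b : ι → ℝ := fun k => a k / w k ^ (1 / p)
  have hwp : ∀ k, 0 < w k ^ (1 / p) := fun k => Real.rpow_pos_of_pos (hw k) _
  have hb : ∀ k, 0 ≤ b k := fun k => div_nonneg (ha k) (hwp k).le
  have hab : ∀ k, a k = w k ^ (1 / p) * b k := fun k => (mul_div_cancel₀ _ (hwp k).ne').symm
  have hap : ∀ k, a k ^ p = w k * b k ^ p := fun k => by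
    rw [hab, Real.mul_rpow (hwp k).le (hb k), ← Real.rpow_mul (hw k).le,
      one_div_mul_cancel hp.ne', Real.rpow_one]
  have ha2 : ∀ k, a k ^ 2 = w k ^ (2 / p) * b k ^ 2 := fun k => by
    rw [hab, mul_pow, ← Real.rpow_mul_natCast (hw k).le]
    ring_nf
  have hT : ∑ k, w k ^ (1 - 2 / p) * a k ^ 2 = ∑ k, w k * b k ^ 2 := by
    refine sum_congr rfl fun k _ => ?_
    rw [ha2, ← mul_assoc, ← Real.rpow_add (hw k), sub_add_cancel, Real.rpow_one]
  obtain ⟨j, -, hj⟩ := exists_max_image univ b ⟨i, mem_univ i⟩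
  -- `b j = max_k a_k / w_k^{1/p}` satisfies `b j ^ 2 ≤ ∑ w_k b_k ^ 2 ≤ b j ^ (2 - p) ∑ a_k ^ p`
  have hlower : b j ^ 2 ≤ ∑ k, w k * b k ^ 2 := by
    have := h j
    rw [hT, ha2 j] at this
    exact le_of_mul_le_mul_left this (Real.rpow_pos_of_pos (hw j) _)
  have hupper : ∑ k, w k * b k ^ 2 ≤ b j ^ (2 - p) * ∑ k, a k ^ p := by
    rw [mul_sum]
    refine sum_le_sum fun k _ => ?_
    rw [hsplit _ (hb k), hap]
    have : b k ^ (2 - p) ≤ b j ^ (2 - p) :=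
      Real.rpow_le_rpow (hb k) (hj k (mem_univ k)) (by linarith)
    have : 0 ≤ w k * b k ^ p := mul_nonneg (hw k).le (Real.rpow_nonneg (hb k) _)
    nlinarith
  rw [hab i]
  refine mul_le_mul_of_nonneg_left ((hj i (mem_univ i)).trans ?_) (hwp i).le
  rcases (hb j).eq_or_lt with hj0 | hj0
  · rw [← hj0]
    exact Real.rpow_nonneg (sum_nonneg fun k _ => Real.rpow_nonneg (ha k) _) _
  have hbp : b j ^ p ≤ ∑ k, a k ^ p := by
    have := hlower.trans hupper
    rw [hsplit _ (hb j), mul_comm] at this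
    exact le_of_mul_le_mul_left this (Real.rpow_pos_of_pos hj0 _)
  calc b j = (b j ^ p) ^ (1 / p) := by
        rw [← Real.rpow_mul hj0.le, mul_one_div_cancel hp.ne', Real.rpow_one]
    _ ≤ _ := by gcongr

theorem le_rpow_mul_sum_rpow_of_two_lt (hp : 2 < p) (ha : ∀ k, 0 ≤ a k)
    (hw : ∀ k, 0 < w k) (h : ∀ k, a k ^ 2 ≤ w k ^ (2 / p) * ∑ j, w j ^ (1 - 2 / p) * a j ^ 2)
    (i : ι) :
    a i ≤ (∑ j, w j) ^ (1 / 2 - 1 / p) * w i ^ (1 / p) * (∑ j, a j ^ p) ^ (1 / p) := by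
  have hp2 : p - 2 ≠ 0 := by linarith
  have hpq : (p / (p - 2)).HolderConjugate (p / 2) := by
    rw [Real.holderConjugate_iff]
    refine ⟨(one_lt_div (by linarith)).mpr (by linarith), ?_⟩
    field_simp
    ring
  have hholder : ∑ j, w j ^ (1 - 2 / p) * a j ^ 2
      ≤ (∑ j, w j) ^ ((p - 2) / p) * (∑ j, a j ^ p) ^ (2 / p) := by
    have := Real.inner_le_Lp_mul_Lq_of_nonneg univ hpq (f := fun j => w j ^ (1 - 2 / p))
      (g := fun j => a j ^ (2 : ℝ)) (fun j _ => (Real.rpow_pos_of_pos (hw j) _).le)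
      (fun j _ => Real.rpow_nonneg (ha j) _)
    have hw' : ∀ j, (w j ^ (1 - 2 / p)) ^ (p / (p - 2)) = w j := fun j => by
      rw [← Real.rpow_mul (hw j).le, show (1 - 2 / p) * (p / (p - 2)) = 1 by field_simp,
        Real.rpow_one]
    have ha' : ∀ j, (a j ^ (2 : ℝ)) ^ (p / 2) = a j ^ p := fun j => by
      rw [← Real.rpow_mul (ha j), show 2 * (p / 2) = p by ring]
    simp only [hw', ha', one_div_div] at this
    simpa only [Real.rpow_two] using this
  have hW : 0 ≤ ∑ j, w j := sum_nonneg fun j _ => (hw j).le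
  have hS : 0 ≤ ∑ j, a j ^ p := sum_nonneg fun j _ => Real.rpow_nonneg (ha j) _
  rw [← pow_le_pow_iff_left₀ (ha i) (mul_nonneg (mul_nonneg (Real.rpow_nonneg hW _)
    (Real.rpow_nonneg (hw i).le _)) (Real.rpow_nonneg hS _)) two_ne_zero]
  refine (h i).trans <|
    (mul_le_mul_of_nonneg_left hholder (Real.rpow_nonneg (hw i).le _)).trans_eq ?_
  rw [mul_pow, mul_pow, ← Real.rpow_mul_natCast hW, ← Real.rpow_mul_natCast (hw i).le,
    ← Real.rpow_mul_natCast hS, show (1 / 2 - 1 / p) * ((2 : ℕ) : ℝ) = (p - 2) / p by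
      field_simp; ring, show 1 / p * ((2 : ℕ) : ℝ) = 2 / p by ring]
  ring

end RealInequalities

namespace Matrix

variable {ι κ : Type*} [Fintype κ]

theorem mulVec_injective_of_rank_eq_card_s17 {K : Type*} [Field K] {U : Matrix ι κ K}
    (hU : U.rank = Fintype.card κ) : Function.Injective U.mulVec := by
  have h := LinearMap.finrank_range_add_finrank_ker U.mulVecLin
  rw [← Matrix.rank, hU, Module.finrank_fintype_fun_eq_card, Nat.add_eq_left,
    Submodule.finrank_eq_zero, LinearMap.ker_eq_bot] at h
  exact h

variable [Fintype ι] [DecidableEq ι]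

theorem dotProduct_transpose_mul_diagonal_mul_mulVec_s17 (U : Matrix ι κ ℝ) (D : ι → ℝ)
    (z : κ → ℝ) : z ⬝ᵥ ((Uᵀ * diagonal D * U) *ᵥ z) = ∑ k, D k * (U *ᵥ z) k ^ 2 := by
  rw [← mulVec_mulVec, ← mulVec_mulVec, dotProduct_mulVec, vecMul_transpose]
  simp only [dotProduct, mulVec_diagonal, sq]
  exact Finset.sum_congr rfl fun k _ => by ring

theorem posDef_transpose_mul_diagonal_mul_s17 {U : Matrix ι κ ℝ} (hU : Function.Injective U.mulVec)
    {D : ι → ℝ} (hD : ∀ k, 0 < D k) : (Uᵀ * diagonal D * U).PosDef := by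
  simpa using (posDef_diagonal_iff.mpr hD).conjTranspose_mul_mul_same hU

variable [DecidableEq κ]

theorem sum_mul_dotProduct_inv_mulVec (U : Matrix ι κ ℝ) (D : ι → ℝ)
    (h : IsUnit (Uᵀ * diagonal D * U).det) :
    ∑ k, D k * (U k ⬝ᵥ ((Uᵀ * diagonal D * U)⁻¹ *ᵥ U k)) = Fintype.card κ := by
  set N := (Uᵀ * diagonal D * U)⁻¹
  have h1 : trace (diagonal D * (U * N * Uᵀ)) = trace (N * (Uᵀ * diagonal D * U)) := by
    rw [trace_mul_comm (diagonal D), show U * N * Uᵀ * diagonal D = U * (N * Uᵀ * diagonal D) by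
      simp only [Matrix.mul_assoc], trace_mul_comm U]
    simp only [Matrix.mul_assoc]
  rw [nonsing_inv_mul _ h, trace_one] at h1
  rw [← h1, trace]
  refine Finset.sum_congr rfl fun k _ => ?_
  rw [diag_apply, diagonal_mul, dotProduct_mulVec]
  rfl

theorem sq_dotProduct_le_dotProduct_inv_mulVec_mul {M : Matrix κ κ ℝ} (hM : M.PosDef)
    (u z : κ → ℝ) : (u ⬝ᵥ z) ^ 2 ≤ (u ⬝ᵥ (M⁻¹ *ᵥ u)) * (z ⬝ᵥ (M *ᵥ z)) := by
  have hsymm : LinearMap.IsSymm M.toBilin' :=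
    LinearMap.BilinForm.isSymm_iff.mp (isSymm_toBilin'_iff_isSymm.mpr hM.isHermitian)
  have hnonneg : ∀ x, 0 ≤ M.toBilin' x x := fun x => by
    simpa [toBilin'_apply'] using hM.posSemidef.dotProduct_mulVec_nonneg x
  have hy : ∀ v, M.toBilin' (M⁻¹ *ᵥ u) v = u ⬝ᵥ v := fun v => by
    have hMT : Mᵀ = M := by simpa using hM.isHermitian.eq
    rw [toBilin'_apply', dotProduct_mulVec, ← mulVec_transpose, hMT, mulVec_mulVec,
      mul_nonsing_inv _ hM.det_pos.ne'.isUnit, one_mulVec]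
  have := M.toBilin'.apply_sq_le_of_symm hnonneg hsymm (M⁻¹ *ᵥ u) z
  rwa [hy, hy, toBilin'_apply'] at this

end Matrix

section LewisWeights

variable {ι κ : Type*} [Fintype ι] [Fintype κ] [DecidableEq ι]

noncomputable def lewisGram (U : Matrix ι κ ℝ) (p : ℝ) (w : ι → ℝ) : Matrix κ κ ℝ :=
  Uᵀ * diagonal (fun k => w k ^ (1 - 2 / p)) * U

theorem posDef_lewisGram {U : Matrix ι κ ℝ} (hU : Function.Injective U.mulVec) {w : ι → ℝ}
    (hw : ∀ i, 0 < w i) (p : ℝ) : (lewisGram U p w).PosDef :=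
  posDef_transpose_mul_diagonal_mul_s17 hU fun k => Real.rpow_pos_of_pos (hw k) _

variable [DecidableEq κ]

structure IsLewisWeights (U : Matrix ι κ ℝ) (p : ℝ) (w : ι → ℝ) : Prop where
  pos : ∀ i, 0 < w i
  eq_rpow : ∀ i, w i = (U i ⬝ᵥ ((lewisGram U p w)⁻¹ *ᵥ U i)) ^ (p / 2)

namespace IsLewisWeights

variable {U : Matrix ι κ ℝ} {p : ℝ} {w : ι → ℝ}

theorem leverage_eq (hw : IsLewisWeights U p w) (hp : 0 < p) (hU : Function.Injective U.mulVec)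
    (i : ι) : U i ⬝ᵥ ((lewisGram U p w)⁻¹ *ᵥ U i) = w i ^ (2 / p) := by
  have hτ : 0 ≤ U i ⬝ᵥ ((lewisGram U p w)⁻¹ *ᵥ U i) := by
    simpa using (posDef_lewisGram hU hw.pos p).inv.posSemidef.dotProduct_mulVec_nonneg (U i)
  rw [hw.eq_rpow i, ← Real.rpow_mul hτ, show p / 2 * (2 / p) = 1 by field_simp, Real.rpow_one]

theorem sum_eq_card (hw : IsLewisWeights U p w) (hp : 0 < p) (hU : Function.Injective U.mulVec) :
    ∑ i, w i = Fintype.card κ := by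
  rw [← sum_mul_dotProduct_inv_mulVec U _ (posDef_lewisGram hU hw.pos p).det_pos.ne'.isUnit]
  refine Finset.sum_congr rfl fun i _ => ?_
  rw [← lewisGram, hw.leverage_eq hp hU i, ← Real.rpow_add (hw.pos i), sub_add_cancel,
    Real.rpow_one]

theorem sq_mulVec_apply_le (hw : IsLewisWeights U p w) (hp : 0 < p)
    (hU : Function.Injective U.mulVec) (z : κ → ℝ) (i : ι) :
    (U *ᵥ z) i ^ 2 ≤ w i ^ (2 / p) * ∑ k, w k ^ (1 - 2 / p) * (U *ᵥ z) k ^ 2 := by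
  rw [← hw.leverage_eq hp hU i, ← dotProduct_transpose_mul_diagonal_mul_mulVec_s17]
  exact sq_dotProduct_le_dotProduct_inv_mulVec_mul (posDef_lewisGram hU hw.pos p) (U i) z

theorem abs_mulVec_apply_le (hw : IsLewisWeights U p w) (hp : 0 < p)
    (hU : Function.Injective U.mulVec) (z : κ → ℝ) (i : ι) :
    |(U *ᵥ z) i| ≤ (Fintype.card κ : ℝ) ^ (1 / 2 - 1 / max 2 p) * w i ^ (1 / p) *
      (∑ k, |(U *ᵥ z) k| ^ p) ^ (1 / p) := by
  have h : ∀ k, |(U *ᵥ z) k| ^ 2 ≤ w k ^ (2 / p) * ∑ j, w j ^ (1 - 2 / p) * |(U *ᵥ z) j| ^ 2 := by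
    simpa only [sq_abs] using hw.sq_mulVec_apply_le hp hU z
  rcases le_or_gt p 2 with hp2 | hp2
  · rw [max_eq_left hp2, sub_self, Real.rpow_zero, one_mul]
    exact le_rpow_mul_sum_rpow_of_le_two hp hp2 (fun k => abs_nonneg _) hw.pos h i
  · rw [max_eq_right hp2.le, ← hw.sum_eq_card hp hU]
    exact le_rpow_mul_sum_rpow_of_two_lt hp2 (fun k => abs_nonneg _) hw.pos h i

end IsLewisWeights

end LewisWeights

theorem abs_mul_sub_le_of_lipschitz {f : ℝ → ℝ} (hf : ∀ s t, |f s - f t| ≤ |s - t|)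
    (hf0 : f 0 = 0) (c s t : ℝ) : |c * (f s - f t)| ≤ |c * s| + |c * t| := by
  have hf_le : ∀ s, |f s| ≤ |s| := fun s => by simpa [hf0] using hf s 0
  rw [abs_mul, abs_mul, abs_mul, ← mul_add]
  exact mul_le_mul_of_nonneg_left ((abs_sub _ _).trans (add_le_add (hf_le s) (hf_le t)))
    (abs_nonneg c)

theorem lipschitz_coordinate_term_bound_general (n d : ℕ) (p : ℝ) (hp : 1 ≤ p)
    (A : Matrix (Fin n) (Fin d) ℝ) (Λ : Fin n → ℝ)
    (f : ℝ → ℝ) (hf : ∀ s t : ℝ, |f s - f t| ≤ |s - t|) (hf0 : f 0 = 0)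
    (hrank : (Matrix.diagonal Λ * A).rank = d)
    (w : Fin n → ℝ) (hw : ∀ i, 0 < w i)
    (hfix : ∀ i, w i =
      ((Matrix.diagonal Λ * A) i ⬝ᵥ
        (((Matrix.diagonal Λ * A)ᵀ * Matrix.diagonal (fun k => w k ^ (1 - 2 / p)) *
            (Matrix.diagonal Λ * A))⁻¹ *ᵥ (Matrix.diagonal Λ * A) i)) ^ (p / 2))
    (R : ℝ) (x xbar : Fin d → ℝ)
    (hx : ∑ i, |((Matrix.diagonal Λ * A) *ᵥ x) i| ^ p ≤ R)
    (hxbar : ∑ i, |((Matrix.diagonal Λ * A) *ᵥ xbar) i| ^ p ≤ R) (i : Fin n) :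
    |Λ i * (f ((A *ᵥ x) i) - f ((A *ᵥ xbar) i))| ≤
      2 * (d : ℝ) ^ ((1 : ℝ) / 2 - 1 / max 2 p) * w i ^ (1 / p) * R ^ (1 / p) := by
  have hp0 : 0 < p := by linarith
  have hU := mulVec_injective_of_rank_eq_card_s17 (hrank.trans (Fintype.card_fin d).symm)
  have hLewis : IsLewisWeights (diagonal Λ * A) p w := ⟨hw, hfix⟩
  have hbound : ∀ z, ∑ k, |((diagonal Λ * A) *ᵥ z) k| ^ p ≤ R →
      |Λ i * (A *ᵥ z) i| ≤ (d : ℝ) ^ ((1 : ℝ) / 2 - 1 / max 2 p) * w i ^ (1 / p) * R ^ (1 / p) :=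
    fun z hz => by
      have := hLewis.abs_mulVec_apply_le hp0 hU z i
      have hUz : ((diagonal Λ * A) *ᵥ z) i = Λ i * (A *ᵥ z) i := by
        rw [← mulVec_mulVec, mulVec_diagonal]
      rw [hUz, Fintype.card_fin] at this
      refine this.trans (mul_le_mul_of_nonneg_left ?_
        (mul_nonneg (by positivity) (Real.rpow_nonneg (hw i).le _)))
      exact Real.rpow_le_rpow (Finset.sum_nonneg fun k _ => by positivity) hz (by positivity)
  linarith [abs_mul_sub_le_of_lipschitz hf hf0 (Λ i) ((A *ᵥ x) i) ((A *ᵥ xbar) i),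
    hbound x hx, hbound xbar hxbar]

/-- If `f` is `1`-Lipschitz with `f 0 = 0`, `Λ` is a positive diagonal matrix, `ΛA` has full
column rank with `ℓ_p`-Lewis weights `w`, and `‖ΛAx‖_p^p ≤ R`, `‖ΛAx̄‖_p^p ≤ R`, then for each
coordinate `i`, `|Λ_{ii}(f(Ax) - f(Ax̄))_i| ≤ 2 d^{1/2-1/max(2,p)} w_i^{1/p} R^{1/p}`. -/
theorem lipschitz_coordinate_term_bound (n d : ℕ) (p : ℝ) (hp : 1 ≤ p)
    (A : Matrix (Fin n) (Fin d) ℝ) (Λ : Fin n → ℝ) (hΛ : ∀ i, 0 < Λ i)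
    (f : ℝ → ℝ) (hf : ∀ s t : ℝ, |f s - f t| ≤ |s - t|) (hf0 : f 0 = 0)
    (hrank : (Matrix.diagonal Λ * A).rank = d)
    (w : Fin n → ℝ) (hw : ∀ i, 0 < w i)
    (hfix : ∀ i, w i =
      ((Matrix.diagonal Λ * A) i ⬝ᵥ
        (((Matrix.diagonal Λ * A)ᵀ * Matrix.diagonal (fun k => w k ^ (1 - 2 / p)) *
            (Matrix.diagonal Λ * A))⁻¹ *ᵥ (Matrix.diagonal Λ * A) i)) ^ (p / 2))
    (R : ℝ) (hR : 0 < R) (x xbar : Fin d → ℝ)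
    (hx : ∑ i, |((Matrix.diagonal Λ * A) *ᵥ x) i| ^ p ≤ R)
    (hxbar : ∑ i, |((Matrix.diagonal Λ * A) *ᵥ xbar) i| ^ p ≤ R) (i : Fin n) :
    |Λ i * (f ((A *ᵥ x) i) - f ((A *ᵥ xbar) i))| ≤
      2 * (d : ℝ) ^ ((1 : ℝ) / 2 - 1 / max 2 p) * w i ^ (1 / p) * R ^ (1 / p) :=
  lipschitz_coordinate_term_bound_general n d p hp A Λ f hf hf0 hrank w hw hfix R x xbar hx hxbar i
end

section
/- Let m be a positive integer and let x ∈ ℝ^{2m} be a random vector whose entries are all equal except for one distinct entry located at a uniformly random position i* ∈ [2m]. Any deterministic algorithm that queries at most m/5 entries of x and outputs whether i* ≤ m or i* > m is correct with probability at most 3/5. -/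
/-- Index-location lower bound: let `x ∈ ℝ^{2m}` have all entries equal to `c₁` except a
single entry `c₂ ≠ c₁` at a uniformly random position `i*`. Any deterministic algorithm that
reads only coordinates in a set `Q` with `|Q| ≤ m/5` and outputs whether `i* ≤ m` is correct
for at most a `3/5` fraction of the positions `i*`. -/
theorem index_location_lower_bound (m : ℕ) (hm : 0 < m) (c₁ c₂ : ℝ) (hc : c₁ ≠ c₂)
    (Q : Finset (Fin (2 * m))) (hQ : 5 * Q.card ≤ m)
    (out : (Fin (2 * m) → ℝ) → Bool)
    (hout : ∀ v v' : Fin (2 * m) → ℝ, (∀ i ∈ Q, v i = v' i) → out v = out v') :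
    ((Finset.univ.filter fun istar : Fin (2 * m) =>
        out (fun i => if i = istar then c₂ else c₁) = decide ((istar : ℕ) < m)).card : ℝ) ≤
      (3 / 5) * (2 * m) := by
  classical
  set b := out (fun _ => c₁) with hb
  have hconst : ∀ istar : Fin (2 * m), istar ∉ Q →
      out (fun i => if i = istar then c₂ else c₁) = b := by
    intro istar h
    apply hout
    intro i hi
    have : i ≠ istar := fun e => h (e ▸ hi)
    simp [this]
  have hsub : (Finset.univ.filter fun istar : Fin (2 * m) =>
      out (fun i => if i = istar then c₂ else c₁) = decide ((istar : ℕ) < m))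
      ⊆ Q ∪ Finset.univ.filter (fun istar : Fin (2 * m) => decide ((istar : ℕ) < m) = b) := by
    intro istar h
    simp only [Finset.mem_filter, Finset.mem_univ, true_and] at h
    by_cases hq : istar ∈ Q
    · exact Finset.mem_union_left _ hq
    · refine Finset.mem_union_right _ ?_
      simp only [Finset.mem_filter, Finset.mem_univ, true_and]
      rw [← h, hconst istar hq]
  have hltset : (Finset.univ.filter fun i : Fin (2 * m) => (i : ℕ) < m) =
      Finset.univ.image (Fin.castLE (by omega) : Fin m → Fin (2 * m)) := by
    ext i
    simp only [Finset.mem_filter, Finset.mem_univ, true_and, Finset.mem_image]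
    constructor
    · intro h; exact ⟨⟨i, h⟩, by simp⟩
    · rintro ⟨j, -, rfl⟩; exact j.2
  have hlt : (Finset.univ.filter fun i : Fin (2 * m) => (i : ℕ) < m).card = m := by
    rw [hltset, Finset.card_image_of_injective _ (Fin.castLE_injective _)]
    simp
  have htot := Finset.card_filter_add_card_filter_not
    (s := (Finset.univ : Finset (Fin (2 * m)))) (p := fun i : Fin (2 * m) => (i : ℕ) < m)
  have hge : (Finset.univ.filter fun i : Fin (2 * m) => ¬ (i : ℕ) < m).card = m := by
    have hcard : (Finset.univ : Finset (Fin (2 * m))).card = 2 * m := by simp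
    omega
  have hcardb : (Finset.univ.filter
      (fun i : Fin (2 * m) => decide ((i : ℕ) < m) = b)).card = m := by
    cases b
    · simpa only [decide_eq_false_iff_not] using hge
    · simpa only [decide_eq_true_eq] using hlt
  have h1 := Finset.card_le_card hsub
  have h2 := Finset.card_union_le Q
    (Finset.univ.filter (fun istar : Fin (2 * m) => decide ((istar : ℕ) < m) = b))
  rw [hcardb] at h2
  have h3 : (Finset.univ.filter fun istar : Fin (2 * m) =>
      out (fun i => if i = istar then c₂ else c₁) = decide ((istar : ℕ) < m)).card
      ≤ Q.card + m := le_trans h1 h2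
  have h3' : ((Finset.univ.filter fun istar : Fin (2 * m) =>
      out (fun i => if i = istar then c₂ else c₁) = decide ((istar : ℕ) < m)).card : ℝ)
      ≤ (Q.card : ℝ) + m := by exact_mod_cast h3
  have hQ' : (5 : ℝ) * Q.card ≤ m := by exact_mod_cast hQ
  linarith
end
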